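/- Let s_1, …, s_m be pairwise distinct complex numbers, S = {s_1,…,s_m}, and let c_1, …, c_m : ℂ \ S → ℂ be functions satisfying the symmetry relation ∑_{i=1}^m c_i(x₀)/(x − s_i)² = ∑_{i=1}^m c_i(x)/(x₀ − s_i)² for all x ≠ x₀ in ℂ \ S. Then there exists a unique symmetric complex m×m matrix A such that c_i(x) = 2 ∑_{j=1}^m A_{ij}/(x − s_j)² for every i and every x ∈ ℂ \ S. (Consequently a kernel G(x₀,x) = 1/(x−x₀) + ∑_i c_i(x₀)/(x−s_i) whose x-derivative B = −(1/2)∂_x G is symmetric must have the form G(x₀,x) = 1/(x−x₀) + 2∑_{i,j} A_{ij}/((x−s_i)(x₀−s_j)²).) -/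

import Mathlib

/-!
Write `φ x = ((x - s j)⁻²)ⱼ`; the hypothesis says `c(x₀) ⬝ φ(x) = c(x) ⬝ φ(x₀)`.
The vectors `φ x`, `x ∉ S`, span `ℂᵐ`: a vector `v` orthogonal to all of them makes
`∑ⱼ vⱼ / (x - sⱼ)²` vanish off `S`, and clearing denominators gives a polynomial with
infinitely many roots whose value at `sₖ` is a nonzero multiple of `vₖ`.
Expanding each basis vector in the `φ y` and applying the symmetry shows `c x = B φ(x)` for a
matrix `B`; the symmetry then reads `φ(x₀) ⬝ (B - Bᵀ) φ(x) = 0`, forcing `Bᵀ = B`, and `A = B / 2`.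
-/

open Finset Matrix Submodule Polynomial

section SpanningFamily

variable {K ι κ α : Type*} [Fintype ι] {φ : α → ι → K}

theorem Matrix.eq_of_forall_dotProduct_eq [CommSemiring K] [DecidableEq ι]
    (hφ : span K (Set.range φ) = ⊤) {u w : ι → K} (h : ∀ a, u ⬝ᵥ φ a = w ⬝ᵥ φ a) : u = w :=
  (dotProductEquiv K ι).injective (LinearMap.ext_on_range hφ h)

theorem Matrix.eq_of_forall_mulVec_eq [CommSemiring K] [DecidableEq ι]
    (hφ : span K (Set.range φ) = ⊤) {M N : Matrix κ ι K} (h : ∀ a, M *ᵥ φ a = N *ᵥ φ a) :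
    M = N :=
  funext fun i => eq_of_forall_dotProduct_eq hφ fun a => congrFun (h a) i

theorem span_range_eq_top_of_forall_dotProduct_eq_zero [Field K] [DecidableEq ι]
    (h : ∀ v : ι → K, (∀ a, v ⬝ᵥ φ a = 0) → v = 0) : span K (Set.range φ) = ⊤ := by
  rw [← dualAnnihilator_eq_bot_iff, eq_bot_iff]
  intro f hf
  obtain ⟨v, rfl⟩ := (dotProductEquiv K ι).surjective f
  have hv : v = 0 := h v fun a => (mem_dualAnnihilator _).mp hf _ (subset_span ⟨a, rfl⟩)
  simp [hv]

theorem exists_mulVec_eq_of_dotProduct_comm [CommSemiring K] [DecidableEq ι]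
    (hφ : span K (Set.range φ) = ⊤) {c : α → ι → K} (hc : ∀ a b, c a ⬝ᵥ φ b = c b ⬝ᵥ φ a) :
    ∃ B : Matrix ι ι K, ∀ a, c a = B *ᵥ φ a := by
  -- by the symmetry, the vectors `v` admitting such a `w` form a submodule containing every `φ b`
  have hrow : ∀ v, ∃ w : ι → K, ∀ a, c a ⬝ᵥ v = w ⬝ᵥ φ a := by
    intro v
    induction (hφ ▸ mem_top : v ∈ span K (Set.range φ)) using span_induction with
    | mem _ hv =>
      obtain ⟨b, rfl⟩ := hv
      exact ⟨c b, fun a => hc a b⟩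
    | zero => exact ⟨0, by simp⟩
    | add v v' _ _ hv hv' =>
      obtain ⟨w, hw⟩ := hv
      obtain ⟨w', hw'⟩ := hv'
      exact ⟨w + w', fun a => by rw [dotProduct_add, add_dotProduct, hw, hw']⟩
    | smul r v _ hv =>
      obtain ⟨w, hw⟩ := hv
      exact ⟨r • w, fun a => by rw [dotProduct_smul, smul_dotProduct, hw]⟩
  choose B hB using fun i => hrow (Pi.single i 1)
  exact ⟨B, fun a => funext fun i => by simpa [mulVec] using hB i a⟩

theorem existsUnique_transpose_eq_and_mulVec_eq [CommSemiring K] [DecidableEq ι]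
    (hφ : span K (Set.range φ) = ⊤) {c : α → ι → K} (hc : ∀ a b, c a ⬝ᵥ φ b = c b ⬝ᵥ φ a) :
    ∃! B : Matrix ι ι K, Bᵀ = B ∧ ∀ a, c a = B *ᵥ φ a := by
  obtain ⟨B, hB⟩ := exists_mulVec_eq_of_dotProduct_comm hφ hc
  refine ⟨B, ⟨?_, hB⟩, fun B' ⟨_, hB'⟩ => eq_of_forall_mulVec_eq hφ fun a => by rw [← hB', hB]⟩
  refine eq_of_forall_mulVec_eq hφ fun a => eq_of_forall_dotProduct_eq hφ fun b => ?_
  calc Bᵀ *ᵥ φ a ⬝ᵥ φ b = B *ᵥ φ b ⬝ᵥ φ a := by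
        rw [mulVec_transpose, ← dotProduct_mulVec, dotProduct_comm]
    _ = B *ᵥ φ a ⬝ᵥ φ b := by rw [← hB, ← hB, hc]

end SpanningFamily

theorem eq_zero_of_forall_sum_div_pow_sub_eq_zero {K ι : Type*} [Field K] [Infinite K]
    [Fintype ι] [DecidableEq ι] {s : ι → K} (hs : Function.Injective s) {n : ℕ} (hn : n ≠ 0)
    {v : ι → K} (hv : ∀ x, (∀ j, x ≠ s j) → ∑ j, v j / (x - s j) ^ n = 0) : v = 0 := by
  set P : K[X] := ∑ j, C (v j) * ∏ l ∈ univ.erase j, (X - C (s l)) ^ n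
  have eval_P : ∀ x, P.eval x = ∑ j, v j * ∏ l ∈ univ.erase j, (x - s l) ^ n := fun x => by
    simp [P, eval_finsetSum, eval_prod]
  have hP : P = 0 := by
    refine eq_zero_of_infinite_isRoot P ((Set.finite_range s).infinite_compl.mono ?_)
    intro x hx
    have hx : ∀ j, x - s j ≠ 0 := fun j => sub_ne_zero.mpr fun h => hx ⟨j, h.symm⟩
    calc P.eval x = (∑ j, v j / (x - s j) ^ n) * ∏ l, (x - s l) ^ n := by
          rw [eval_P, sum_mul]
          refine sum_congr rfl fun j _ => ?_
          rw [← mul_prod_erase univ _ (mem_univ j)]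
          field_simp [hx j]
      _ = 0 := by rw [hv x fun j h => hx j (sub_eq_zero.mpr h), zero_mul]
  funext k
  have hk : v k * ∏ l ∈ univ.erase k, (s k - s l) ^ n = 0 := by
    have h0 : P.eval (s k) = 0 := by rw [hP, eval_zero]
    rwa [eval_P, sum_eq_single k] at h0
    · intro j _ hj
      rw [prod_eq_zero (mem_erase.mpr ⟨hj.symm, mem_univ k⟩) (by simp [hn]), mul_zero]
    · simp
  refine (mul_eq_zero.mp hk).resolve_right (prod_ne_zero_iff.mpr fun l hl => ?_)
  exact pow_ne_zero n (sub_ne_zero.mpr (hs.ne (ne_of_mem_erase hl).symm))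

theorem span_range_inv_pow_sub_eq_top {K ι : Type*} [Field K] [Infinite K] [Fintype ι]
    [DecidableEq ι] {s : ι → K} (hs : Function.Injective s) {n : ℕ} (hn : n ≠ 0) :
    span K (Set.range fun x : {x : K // ∀ j, x ≠ s j} => fun j => ((x.1 - s j) ^ n)⁻¹) = ⊤ :=
  span_range_eq_top_of_forall_dotProduct_eq_zero fun v hv =>
    eq_zero_of_forall_sum_div_pow_sub_eq_zero hs hn fun x hx => by
      simpa [dotProduct, div_eq_mul_inv] using hv ⟨x, hx⟩

theorem symmetric_kernel_structure (m : ℕ) (s : Fin m → ℂ) (hs : Function.Injective s)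
    (c : Fin m → ℂ → ℂ)
    (hsym : ∀ x₀ x : ℂ, (∀ i, x₀ ≠ s i) → (∀ i, x ≠ s i) → x ≠ x₀ →
      ∑ i, c i x₀ / (x - s i) ^ 2 = ∑ i, c i x / (x₀ - s i) ^ 2) :
    ∃! A : Matrix (Fin m) (Fin m) ℂ,
      (∀ i j, A i j = A j i) ∧
      ∀ i, ∀ x : ℂ, (∀ j, x ≠ s j) → c i x = 2 * ∑ j, A i j / (x - s j) ^ 2 := by
  set φ : {x : ℂ // ∀ j, x ≠ s j} → Fin m → ℂ := fun x j => ((x.1 - s j) ^ 2)⁻¹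
  have hφ : span ℂ (Set.range φ) = ⊤ := span_range_inv_pow_sub_eq_top hs two_ne_zero
  have hc : ∀ a b : {x : ℂ // ∀ j, x ≠ s j},
      (fun i => c i a / 2) ⬝ᵥ φ b = (fun i => c i b / 2) ⬝ᵥ φ a := by
    intro a b
    rcases eq_or_ne a b with rfl | hab
    · rfl
    · have := hsym a b a.2 b.2 (Subtype.coe_injective.ne hab.symm)
      simp only [dotProduct, φ, ← div_eq_mul_inv, div_right_comm _ (2 : ℂ), ← sum_div, this]
  refine (existsUnique_congr fun A => and_congr ?_ ?_).mp
    (existsUnique_transpose_eq_and_mulVec_eq hφ hc)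
  · exact ⟨fun h i j => congrFun (congrFun h j) i, fun h => Matrix.ext fun i j => h j i⟩
  · simp only [funext_iff, Subtype.forall, mulVec, dotProduct, φ, ← div_eq_mul_inv,
      div_eq_iff (two_ne_zero' ℂ)]
    exact ⟨fun h i x hx => (h x hx i).trans (mul_comm _ _),
      fun h x hx i => (h i x hx).trans (mul_comm _ _)⟩
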